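/- arXiv:2411.18842 — 6 statements merged into one kernel-verified Lean document; each statement's English description precedes it below -/
import Mathlib

section
/- Let H be an (s,t-1)-linear hypergraph on vertex set V with |V| = m, fix integers v and k with 1 ≤ v < s ≤ k ≤ m, fix a v-subset X of V, let α be the unique integer with 0 ≤ α < binom(k-v,s-v) and α ≡ (t-1)·binom(m-v,s-v) (mod binom(k-v,s-v)), and let c = ((t-1)·binom(m-v,s-v) - α)/binom(k-v,s-v). Define τ(X) to be the sum over all edges E containing X with |E| < k of (binom(k-v,s-v) - binom(|E|-v,s-v)). Then the degree of X (number of edges containing X) satisfies deg_H(X) ≤ c + τ(X)/(binom(k-v,s-v) - α). -/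
/-!
Every edge `e ⊇ X` contains exactly `C(|e|-v, s-v)` of the `s`-sets through `X`, and each of the
`C(m-v, s-v)` such `s`-sets lies in at most `t-1` edges, so double counting gives
`∑_{e ⊇ X} C(|e|-v, s-v) ≤ (t-1)·C(m-v, s-v) = c·C(k-v, s-v) + α`. Adding the deficiencies raises
every summand to at least `C(k-v, s-v)`, hence `deg(X)·C(k-v, s-v) ≤ c·C(k-v, s-v) + α + τ(X)`, and
since `α < C(k-v, s-v)` this forces `(deg(X) - c)·(C(k-v, s-v) - α) ≤ τ(X)`.
-/

open Finset

namespace Multiset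

variable {α β : Type*}

theorem sum_map_card_filter (M : Multiset β) (T : Finset α) (r : α → β → Prop)
    [∀ a b, Decidable (r a b)] :
    (M.map fun e => #{S ∈ T | r S e}).sum = ∑ S ∈ T, M.countP (r S) := by
  induction M using Multiset.induction_on with
  | empty => simp
  | cons a M ih =>
    rw [map_cons, sum_cons, ih, add_comm]
    simp only [countP_cons, sum_add_distrib, card_filter]

theorem card_mul_le_sum_map_add_sum_filter_map_tsub (M : Multiset β) (p : β → Prop)
    [DecidablePred p] (g : β → ℕ) (D : ℕ) (h : ∀ e ∈ M, ¬ p e → D ≤ g e) :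
    card M * D ≤ (M.map g).sum + ((M.filter p).map fun e => D - g e).sum := by
  induction M using Multiset.induction_on with
  | empty => simp
  | cons a M ih =>
    have ih := ih fun e he => h e (mem_cons_of_mem he)
    by_cases ha : p a
    · simp only [card_cons, add_mul, one_mul, map_cons, sum_cons, filter_cons_of_pos _ ha]
      omega
    · have := h a (mem_cons_self a M) ha
      simp only [card_cons, add_mul, one_mul, map_cons, sum_cons, filter_cons_of_neg _ ha]
      omega

end Multiset

theorem sum_choose_le_of_countP_le {α : Type*} [Fintype α] [DecidableEq α]
    {E : Multiset (Finset α)} {s b : ℕ} (hlin : ∀ S : Finset α, #S = s → E.countP (S ⊆ ·) ≤ b)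
    (X : Finset α) (hXs : #X ≤ s) :
    ((E.filter (X ⊆ ·)).map fun e => (#e - #X).choose (s - #X)).sum ≤
      b * (Fintype.card α - #X).choose (s - #X) := by
  set T := {S ∈ (univ : Finset α).powersetCard s | X ⊆ S}
  have hT : #T = (Fintype.card α - #X).choose (s - #X) := by
    rw [card_filter_powersetCard_subset X univ s (subset_univ X) hXs, card_univ]
  have hedge : ∀ e ∈ E.filter (X ⊆ ·), (#e - #X).choose (s - #X) = #{S ∈ T | S ⊆ e} := by
    intro e he
    rw [← card_filter_powersetCard_subset X e s (Multiset.mem_filter.1 he).2 hXs]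
    congr 1
    ext S
    simp only [T, mem_filter, mem_powersetCard, subset_univ, true_and]
    tauto
  calc _ = ∑ S ∈ T, (E.filter (X ⊆ ·)).countP (S ⊆ ·) := by
        rw [Multiset.map_congr rfl hedge, Multiset.sum_map_card_filter]
    _ ≤ ∑ _S ∈ T, b := by
        refine sum_le_sum fun S hS => ?_
        exact (Multiset.countP_le_of_le _ (Multiset.filter_le _ E)).trans
          (hlin S (mem_powersetCard.1 (mem_filter.1 hS).1).2)
    _ = b * (Fintype.card α - #X).choose (s - #X) := by rw [sum_const, hT, smul_eq_mul, mul_comm]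

theorem le_add_div_sub_of_mul_le {d c a τ D : ℕ} (ha : a < D) (h : d * D ≤ c * D + a + τ) :
    (d : ℝ) ≤ c + τ / (D - a) := by
  have hDa : (0 : ℝ) < D - a := by
    have : (a : ℝ) < D := by exact_mod_cast ha
    linarith
  have h' : (d : ℝ) * D ≤ c * D + a + τ := by exact_mod_cast h
  rcases le_or_gt d c with hdc | hdc
  · have : (d : ℝ) ≤ c := by exact_mod_cast hdc
    have := div_nonneg (Nat.cast_nonneg τ) hDa.le
    linarith
  · have hdc' : (c : ℝ) + 1 ≤ d := by exact_mod_cast hdc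
    have : (0 : ℝ) ≤ a * (d - c - 1) := mul_nonneg (Nat.cast_nonneg a) (by linarith)
    have : (d - c : ℝ) ≤ τ / (D - a) := by
      rw [le_div_iff₀ hDa]
      nlinarith
    linarith

theorem stmt_2_general (m s t v k : ℕ) (hvs : v < s)
    (E : Multiset (Finset (Fin m)))
    (hlin : ∀ S : Finset (Fin m), S.card = s →
      Multiset.countP (fun e => S ⊆ e) E ≤ t - 1)
    (X : Finset (Fin m)) (hX : X.card = v)
    (α c : ℕ) (hα : α < Nat.choose (k - v) (s - v))
    (hc : (t - 1) * Nat.choose (m - v) (s - v) = c * Nat.choose (k - v) (s - v) + α) :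
    (Multiset.countP (fun e => X ⊆ e) E : ℝ) ≤
      c + (((E.filter (fun e => X ⊆ e ∧ e.card < k)).map
              (fun e => Nat.choose (k - v) (s - v) - Nat.choose (e.card - v) (s - v))).sum : ℝ) /
            ((Nat.choose (k - v) (s - v) : ℝ) - α) := by
  have hdouble := sum_choose_le_of_countP_le hlin X (hX ▸ hvs.le)
  rw [hX, Fintype.card_fin] at hdouble
  have hdef := (E.filter (X ⊆ ·)).card_mul_le_sum_map_add_sum_filter_map_tsub (·.card < k)
    (fun e => (e.card - v).choose (s - v)) ((k - v).choose (s - v))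
    fun e _ he => Nat.choose_le_choose _ (by omega)
  simp only [Multiset.filter_filter, and_comm, ← Multiset.countP_eq_card_filter] at hdef
  exact le_add_div_sub_of_mul_le hα (by omega)

/-- Degree bound for a fixed `v`-subset `X` in an `(s,t-1)`-linear hypergraph:
`deg(X) ≤ c + τ(X)/(C(k-v,s-v) - α)`, where `τ(X)` is the total `(k,s,v)`-deficiency
of edges containing `X`, `α` is the residue of `(t-1)·C(m-v,s-v)` modulo `C(k-v,s-v)`
and `c = ((t-1)·C(m-v,s-v) - α)/C(k-v,s-v)`. -/
theorem stmt_2 (m s t v k : ℕ) (hs : 2 ≤ s) (ht : 2 ≤ t)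
    (hv : 1 ≤ v) (hvs : v < s) (hsk : s ≤ k) (hkm : k ≤ m)
    (E : Multiset (Finset (Fin m)))
    (hsize : ∀ e ∈ E, s - 1 ≤ e.card)
    (hlin : ∀ S : Finset (Fin m), S.card = s →
      Multiset.countP (fun e => S ⊆ e) E ≤ t - 1)
    (X : Finset (Fin m)) (hX : X.card = v)
    (α c : ℕ) (hα : α < Nat.choose (k - v) (s - v))
    (hc : (t - 1) * Nat.choose (m - v) (s - v) = c * Nat.choose (k - v) (s - v) + α) :
    (Multiset.countP (fun e => X ⊆ e) E : ℝ) ≤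
      c + (((E.filter (fun e => X ⊆ e ∧ e.card < k)).map
              (fun e => Nat.choose (k - v) (s - v) - Nat.choose (e.card - v) (s - v))).sum : ℝ) /
            ((Nat.choose (k - v) (s - v) : ℝ) - α) :=
  stmt_2_general m s t v k hvs E hlin X hX α c hα hc
end

section
/- Let H be an (s,t-1)-linear hypergraph with m vertices, exactly n_i edges of size i for each i ∈ {s-1,...,m}, and no edges of size less than s-1. For any positive integers v and k with v < s ≤ k ≤ m, letting α be the integer with α ≡ (t-1)·binom(m-v,s-v) (mod binom(k-v,s-v)) and 0 ≤ α < binom(k-v,s-v), we have (1/(binom(k-v,s-v) - α))·Σ_{i=s-1}^{k-1} (binom(i-v,s-v) - α)·binom(i,v)·n_i + Σ_{i=k}^{m} binom(i,v)·n_i ≤ binom(m,v)·((t-1)·binom(m-v,s-v) - α)/binom(k-v,s-v). -/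
/-!
Write `C = C(k-v, s-v)` and `(t-1) C(m-v, s-v) = C q + α`. Fix a `v`-set `V`. Counting pairs
`(S, e)` with `V ⊆ S ⊆ e`, `|S| = s`, the linearity gives `∑_{e ⊇ V} C(|e|-v, s-v) ≤ C q + α`.
Edges of size `< k` contribute at most `C - 1` to this sum and the others at least `C`, so by
integrality the capped weights `C(min(|e|, k) - v, s-v) - α` of the edges through `V` sum to at
most `(C - α) q`. Summing over all `v`-sets counts every edge of size `i` exactly `C(i, v)` times.
-/

open Finset

section DoubleCounting

variable {β M : Type*} [Fintype β] [DecidableEq β] [AddCommMonoid M] {s : ℕ} {V : Finset β}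

lemma sum_filter_powersetCard_ite_subset (hV : #V ≤ s) (e : Finset β) (x : M) :
    ∑ S ∈ (powersetCard s univ).filter (V ⊆ ·), (if S ⊆ e then x else 0) =
      if V ⊆ e then (#e - #V).choose (s - #V) • x else 0 := by
  rw [sum_ite, sum_const_zero, add_zero, sum_const, filter_filter]
  split_ifs with hVe
  · have : (powersetCard s univ).filter (fun S => V ⊆ S ∧ S ⊆ e) =
        (powersetCard s e).filter (V ⊆ ·) := by
      ext S; simp only [mem_filter, mem_powersetCard, subset_univ, true_and]; tauto
    rw [this, card_filter_powersetCard_subset V e s hVe hV]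
  · rw [filter_false_of_mem fun S _ h => hVe (h.1.trans h.2), card_empty, zero_smul]

lemma sum_filter_powersetCard_sum_filter_subset (hV : #V ≤ s) (E : Multiset (Finset β))
    (g : Finset β → M) :
    ∑ S ∈ (powersetCard s univ).filter (V ⊆ ·), ((E.filter (S ⊆ ·)).map g).sum =
      ((E.filter (V ⊆ ·)).map fun e => (#e - #V).choose (s - #V) • g e).sum := by
  induction E using Multiset.induction_on with
  | empty => simp
  | cons e E ih =>
    simp only [Multiset.filter_cons, Multiset.map_add, Multiset.sum_add, sum_add_distrib, ih,
      apply_ite Multiset.sum, apply_ite (Multiset.map _), Multiset.map_singleton,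
      Multiset.sum_singleton, Multiset.map_zero, Multiset.sum_zero,
      sum_filter_powersetCard_ite_subset hV]

end DoubleCounting

/- Either `N ≤ q - D`, and `A ≤ (C - 1) N` gives the bound, or `N + D ≥ q + 1`, and then
`α (N + D)` absorbs the remainder `α` in `A + C D ≤ C q + α`. -/
lemma sub_mul_add_le_of_le_mul_add {A N D C α q : ℤ} (hα0 : 0 ≤ α) (hαC : α < C) (hA : 0 ≤ A)
    (hAN : A ≤ (C - 1) * N) (hbound : A + C * D ≤ C * q + α) :
    A - α * N + (C - α) * D ≤ (C - α) * q := by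
  have hDq : D ≤ q := by nlinarith
  rcases le_or_gt N (q - D) with h | h
  · nlinarith [mul_le_mul_of_nonneg_left h (show (0:ℤ) ≤ C - 1 - α by omega)]
  · nlinarith [mul_le_mul_of_nonneg_left (show q - D + 1 ≤ N by omega) hα0]

lemma Multiset.sum_map_ite_sub_le {ι : Type*} (X : Multiset ι) (p : ι → Prop) [DecidablePred p]
    (f : ι → ℤ) {C α q : ℤ} (hα0 : 0 ≤ α) (hαC : α < C) (hf : ∀ x ∈ X, 0 ≤ f x)
    (hsmall : ∀ x ∈ X, p x → f x < C) (hbig : ∀ x ∈ X, ¬p x → C ≤ f x)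
    (hsum : (X.map f).sum ≤ C * q + α) :
    (X.map fun x => if p x then f x - α else C - α).sum ≤ (C - α) * q := by
  have hsplit (g : ι → ℤ) :
      (X.map g).sum = ((X.filter p).map g).sum + ((X.filter (¬p ·)).map g).sum := by
    rw [← Multiset.sum_add, ← Multiset.map_add, Multiset.filter_add_not]
  set A := ((X.filter p).map f).sum
  have hw : (X.map fun x => if p x then f x - α else C - α).sum
      = A - α * card (X.filter p) + (C - α) * card (X.filter (¬p ·)) := by
    rw [hsplit, Multiset.map_congr rfl (fun x hx => if_pos (Multiset.of_mem_filter hx)),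
      Multiset.map_congr rfl (fun x hx => if_neg (Multiset.of_mem_filter (p := (¬p ·)) hx))]
    simp [Multiset.sum_map_sub, A, mul_comm]
  have hA : 0 ≤ A := Multiset.sum_nonneg fun y hy => by
    obtain ⟨x, hx, rfl⟩ := Multiset.mem_map.mp hy
    exact hf x (Multiset.mem_of_mem_filter hx)
  have hAN : A ≤ (C - 1) * card (X.filter p) := by
    have := Multiset.sum_le_card_nsmul ((X.filter p).map f) (C - 1) fun y hy => by
      obtain ⟨x, hx, rfl⟩ := Multiset.mem_map.mp hy
      have := Multiset.mem_filter.mp hx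
      linarith [hsmall x this.1 this.2]
    simpa [mul_comm] using this
  have hD : C * card (X.filter (¬p ·)) ≤ ((X.filter (¬p ·)).map f).sum := by
    have := Multiset.card_nsmul_le_sum (s := (X.filter (¬p ·)).map f) (a := C) fun y hy => by
      obtain ⟨x, hx, rfl⟩ := Multiset.mem_map.mp hy
      have := Multiset.mem_filter.mp hx
      exact hbig x this.1 this.2
    simpa [mul_comm] using this
  rw [hw]
  exact sub_mul_add_le_of_le_mul_add hα0 hαC hA hAN (by linarith [hsplit f])

lemma Multiset.sum_map_card_eq_sum_countP {β M : Type*} [AddCommMonoid M]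
    (E : Multiset (Finset β)) (h : ℕ → M) {I : Finset ℕ} (hE : ∀ e ∈ E, #e ∈ I) :
    (E.map fun e => h #e).sum = ∑ i ∈ I, E.countP (fun e => #e = i) • h i := by
  induction E using Multiset.induction_on with
  | empty => simp
  | cons e E ih =>
    rw [Multiset.map_cons, Multiset.sum_cons, ih fun e' he' => hE e' (Multiset.mem_cons_of_mem he')]
    simp [Multiset.countP_cons, add_smul, sum_add_distrib, ite_smul,
      hE e (Multiset.mem_cons_self e E), add_comm]

lemma Nat.choose_lt_choose_succ {n k : ℕ} (hk : 0 < k) (hkn : k ≤ n + 1) :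
    n.choose k < (n + 1).choose k := by
  obtain ⟨j, rfl⟩ := Nat.exists_eq_add_one_of_ne_zero hk.ne'
  rw [Nat.choose_succ_succ']
  have := Nat.choose_pos (show j ≤ n by omega)
  omega

def cappedWeight (v s k α i : ℕ) : ℤ :=
  if i < k then ((i - v).choose (s - v) : ℤ) - α else ((k - v).choose (s - v) : ℤ) - α

section LinearHypergraph

variable {β : Type*} [Fintype β] [DecidableEq β] {E : Multiset (Finset β)} {s r : ℕ}

lemma sum_map_choose_filter_subset_le
    (hlin : ∀ S : Finset β, #S = s → E.countP (S ⊆ ·) ≤ r) {V : Finset β} (hV : #V ≤ s) :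
    ((E.filter (V ⊆ ·)).map fun e => (#e - #V).choose (s - #V)).sum ≤
      (Fintype.card β - #V).choose (s - #V) * r := by
  have hdc := sum_filter_powersetCard_sum_filter_subset hV E (fun _ => (1 : ℕ))
  simp only [smul_eq_mul, mul_one, Multiset.map_const', Multiset.sum_replicate] at hdc
  rw [← hdc, ← card_univ, ← card_filter_powersetCard_subset V univ s (subset_univ V) hV,
    ← smul_eq_mul]
  refine sum_le_card_nsmul _ _ _ fun S hS => ?_
  rw [← Multiset.countP_eq_card_filter]
  exact hlin S (mem_powersetCard.mp (mem_filter.mp hS).1).2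

lemma sum_map_cappedWeight_filter_subset_le
    (hlin : ∀ S : Finset β, #S = s → E.countP (S ⊆ ·) ≤ r) {v k α q : ℕ} {V : Finset β}
    (hV : #V = v) (hvs : v < s) (hsk : s ≤ k) (hα : α < (k - v).choose (s - v))
    (hT : (Fintype.card β - v).choose (s - v) * r = (k - v).choose (s - v) * q + α) :
    ((E.filter (V ⊆ ·)).map fun e => cappedWeight v s k α #e).sum ≤
      (((k - v).choose (s - v) : ℤ) - α) * q := by
  have hbound := sum_map_choose_filter_subset_le hlin (V := V) (by omega)
  rw [hV, hT] at hbound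
  have hlt : (k - 1 - v).choose (s - v) < (k - v).choose (s - v) := by
    simpa [show k - 1 - v + 1 = k - v by omega] using
      Nat.choose_lt_choose_succ (n := k - 1 - v) (k := s - v) (by omega) (by omega)
  refine Multiset.sum_map_ite_sub_le _ _ _ (by positivity) (by exact_mod_cast hα)
    (fun _ _ => by positivity) (fun e _ he => ?_) (fun e _ he => ?_) ?_
  · exact_mod_cast (Nat.choose_le_choose _ (by omega)).trans_lt hlt
  · exact_mod_cast Nat.choose_le_choose _ (by omega)
  · simpa [Multiset.map_map] using (Nat.cast_le (α := ℤ)).mpr hbound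

lemma sum_map_choose_mul_cappedWeight_le
    (hlin : ∀ S : Finset β, #S = s → E.countP (S ⊆ ·) ≤ r) {v k α q : ℕ}
    (hvs : v < s) (hsk : s ≤ k) (hα : α < (k - v).choose (s - v))
    (hT : (Fintype.card β - v).choose (s - v) * r = (k - v).choose (s - v) * q + α) :
    (E.map fun e => (#e).choose v • cappedWeight v s k α #e).sum ≤
      (Fintype.card β).choose v • ((((k - v).choose (s - v) : ℤ) - α) * q) := by
  have hdc := sum_filter_powersetCard_sum_filter_subset (s := v) (V := ∅) (by simp) E
    (fun e => cappedWeight v s k α #e)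
  simp only [empty_subset, filter_true, Multiset.filter_true, card_empty, Nat.sub_zero] at hdc
  rw [← hdc, ← card_univ, ← card_powersetCard]
  exact sum_le_card_nsmul _ _ _ fun V hV =>
    sum_map_cappedWeight_filter_subset_le hlin (mem_powersetCard.mp hV).2 hvs hsk hα hT

lemma sum_Icc_cappedWeight_le (hsize : ∀ e ∈ E, s - 1 ≤ #e)
    (hlin : ∀ S : Finset β, #S = s → E.countP (S ⊆ ·) ≤ r) {v k α q : ℕ}
    (hvs : v < s) (hsk : s ≤ k) (hα : α < (k - v).choose (s - v))
    (hT : (Fintype.card β - v).choose (s - v) * r = (k - v).choose (s - v) * q + α) :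
    ∑ i ∈ Icc (s - 1) (k - 1),
        (((i - v).choose (s - v) : ℤ) - α) * i.choose v * E.countP (fun e => #e = i) +
      (((k - v).choose (s - v) : ℤ) - α) *
        ∑ i ∈ Icc k (Fintype.card β), (i.choose v : ℤ) * E.countP (fun e => #e = i) ≤
    (Fintype.card β).choose v * ((((k - v).choose (s - v) : ℤ) - α) * q) := by
  have hdisj : Disjoint (Icc (s - 1) (k - 1)) (Icc k (Fintype.card β)) :=
    disjoint_left.mpr fun i hi hi' => by simp only [mem_Icc] at hi hi'; omega
  have hmem : ∀ e ∈ E, #e ∈ Icc (s - 1) (k - 1) ∪ Icc k (Fintype.card β) := fun e he => by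
    have := card_le_univ e
    have := hsize e he
    simp only [mem_union, mem_Icc]
    omega
  have h := sum_map_choose_mul_cappedWeight_le hlin hvs hsk hα hT
  rw [Multiset.sum_map_card_eq_sum_countP E (fun i => i.choose v • cappedWeight v s k α i) hmem,
    sum_union hdisj] at h
  simp only [nsmul_eq_mul] at h
  rw [mul_sum]
  convert h using 2 <;> refine sum_congr rfl fun i hi => ?_ <;> rw [mem_Icc] at hi
  · rw [cappedWeight, if_pos (by omega)]
    ring
  · rw [cappedWeight, if_neg (by omega)]
    ring

end LinearHypergraph

theorem stmt_4_general (m s t v k : ℕ) (ht : 2 ≤ t)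
    (hvs : v < s) (hsk : s ≤ k)
    (E : Multiset (Finset (Fin m)))
    (hsize : ∀ e ∈ E, s - 1 ≤ e.card)
    (hlin : ∀ S : Finset (Fin m), S.card = s →
      Multiset.countP (fun e => S ⊆ e) E ≤ t - 1)
    (nn : ℕ → ℕ)
    (hni : ∀ i, nn i = Multiset.countP (fun e => e.card = i) E)
    (α : ℕ) (hα : α < Nat.choose (k - v) (s - v))
    (hmod : α ≡ (t - 1) * Nat.choose (m - v) (s - v) [MOD Nat.choose (k - v) (s - v)]) :
    (1 / ((Nat.choose (k - v) (s - v) : ℝ) - α)) *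
        ∑ i ∈ Finset.Icc (s - 1) (k - 1),
          ((Nat.choose (i - v) (s - v) : ℝ) - α) * Nat.choose i v * nn i +
      ∑ i ∈ Finset.Icc k m, (Nat.choose i v : ℝ) * nn i ≤
    (Nat.choose m v : ℝ) *
      (((t - 1 : ℝ) * Nat.choose (m - v) (s - v) - α) / Nat.choose (k - v) (s - v)) := by
  set C := (k - v).choose (s - v)
  set q := (t - 1) * (m - v).choose (s - v) / C
  have hT : (m - v).choose (s - v) * (t - 1) = C * q + α := by
    rw [mul_comm, ← Nat.mod_eq_of_lt hα, hmod, Nat.div_add_mod]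
  have hZ := sum_Icc_cappedWeight_le hsize hlin hvs hsk hα (by simpa using hT)
  simp only [Fintype.card_fin, ← hni] at hZ
  have hR := (Int.cast_le (R := ℝ)).mpr hZ
  push_cast at hR
  have hαC : (0 : ℝ) < C - α := sub_pos.mpr (by exact_mod_cast hα)
  have hC : (0 : ℝ) < C := hαC.trans_le (sub_le_self _ α.cast_nonneg)
  have hq : ((t - 1 : ℝ) * (m - v).choose (s - v) - α) / C = q := by
    have hTR : ((m - v).choose (s - v) : ℝ) * ((t - 1 : ℕ) : ℝ) = C * q + α := by
      exact_mod_cast hT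
    rw [Nat.cast_sub (by omega : 1 ≤ t), Nat.cast_one] at hTR
    rw [mul_comm, hTR, add_sub_cancel_right, mul_div_cancel_left₀ _ hC.ne']
  rw [hq, one_div_mul_eq_div, div_add' _ _ _ hαC.ne', div_le_iff₀ hαC]
  linarith

/-- Theorem 1 (new family of constraints): for an `(s,t-1)`-linear hypergraph with `m`
vertices, `n_i` edges of size `i` and no edges of size `< s-1`, and `v < s ≤ k ≤ m`,
`1/(C(k-v,s-v)-α)·∑_{i=s-1}^{k-1}(C(i-v,s-v)-α)·C(i,v)·n_i + ∑_{i=k}^m C(i,v)·n_i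
  ≤ C(m,v)·((t-1)·C(m-v,s-v)-α)/C(k-v,s-v)`. -/
theorem stmt_4 (m s t v k : ℕ) (hs : 2 ≤ s) (ht : 2 ≤ t)
    (hv : 1 ≤ v) (hvs : v < s) (hsk : s ≤ k) (hkm : k ≤ m)
    (E : Multiset (Finset (Fin m)))
    (hsize : ∀ e ∈ E, s - 1 ≤ e.card)
    (hlin : ∀ S : Finset (Fin m), S.card = s →
      Multiset.countP (fun e => S ⊆ e) E ≤ t - 1)
    (nn : ℕ → ℕ)
    (hni : ∀ i, nn i = Multiset.countP (fun e => e.card = i) E)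
    (α : ℕ) (hα : α < Nat.choose (k - v) (s - v))
    (hmod : α ≡ (t - 1) * Nat.choose (m - v) (s - v) [MOD Nat.choose (k - v) (s - v)]) :
    (1 / ((Nat.choose (k - v) (s - v) : ℝ) - α)) *
        ∑ i ∈ Finset.Icc (s - 1) (k - 1),
          ((Nat.choose (i - v) (s - v) : ℝ) - α) * Nat.choose i v * nn i +
      ∑ i ∈ Finset.Icc k m, (Nat.choose i v : ℝ) * nn i ≤
    (Nat.choose m v : ℝ) *
      (((t - 1 : ℝ) * Nat.choose (m - v) (s - v) - α) / Nat.choose (k - v) (s - v)) :=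
  stmt_4_general m s t v k ht hvs hsk E hsize hlin nn hni α hα hmod
end

section
/- For positive integers k, s, t, m, n with s ≥ 2 and k ≥ s-1, the Zarankiewicz number satisfies z(m,n;s,t) ≤ (t-1)·binom(m,s)/binom(k,s-1) + (k+1)(s-1)n/s. -/
/-- Roman's key inequality: for `1 ≤ r ≤ k` and any `d`,
`C(k,r) * ((r+1)d - (k+1)r) ≤ (r+1) C(d,r+1)` (in ℤ). -/
lemma roman_key (k r : ℕ) (hkr : r ≤ k) (d : ℕ) :
    (Nat.choose k r : ℤ) * ((r + 1) * d - (k + 1) * r) ≤ (r + 1) * Nat.choose d (r + 1) := by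
  -- base case d = k
  have hbase : (Nat.choose k r : ℤ) * ((r + 1) * k - (k + 1) * r)
      = (r + 1) * Nat.choose k (r + 1) := by
    have h := Nat.choose_succ_right_eq k r
    have h' : ((Nat.choose k (r + 1) : ℤ)) * (r + 1) = (Nat.choose k r : ℤ) * ((k : ℤ) - r) := by
      have := congrArg (fun x : ℕ => (x : ℤ)) h
      push_cast [Nat.cast_sub hkr] at this
      linarith [this]
    linarith [h']
  -- upward induction: for d = k + j
  have hup : ∀ j : ℕ, (Nat.choose k r : ℤ) * ((r + 1) * ((k + j : ℕ) : ℤ) - (k + 1) * r)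
      ≤ (r + 1) * Nat.choose (k + j) (r + 1) := by
    intro j
    induction j with
    | zero => simpa using hbase.le
    | succ j ih =>
      have hkj : k + (j + 1) = (k + j) + 1 := by omega
      rw [hkj]
      have hmono : (Nat.choose k r : ℤ) ≤ Nat.choose (k + j) r := by
        exact_mod_cast Nat.choose_le_choose r (Nat.le_add_right k j)
      have hpascal : (Nat.choose (k + j + 1) (r + 1) : ℤ)
          = Nat.choose (k + j) r + Nat.choose (k + j) (r + 1) := by
        exact_mod_cast Nat.choose_succ_succ (k + j) r
      rw [hpascal]
      push_cast at ih ⊢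
      nlinarith [ih, hmono]
  -- downward induction: for d + j = k
  have hdown : ∀ j d : ℕ, d + j = k → (Nat.choose k r : ℤ) * ((r + 1) * d - (k + 1) * r)
      ≤ (r + 1) * Nat.choose d (r + 1) := by
    intro j
    induction j with
    | zero => intro d hd; subst hd; simpa using hbase.le
    | succ j ih =>
      intro d hd
      have ih' := ih (d + 1) (by omega)
      have hmono : (Nat.choose d r : ℤ) ≤ Nat.choose k r := by
        exact_mod_cast Nat.choose_le_choose r (by omega : d ≤ k)
      have hpascal : (Nat.choose (d + 1) (r + 1) : ℤ)
          = Nat.choose d r + Nat.choose d (r + 1) := by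
        exact_mod_cast Nat.choose_succ_succ d r
      push_cast at ih' ⊢
      rw [hpascal] at ih'
      nlinarith [ih', hmono]
  rcases le_total d k with h | h
  · exact hdown (k - d) d (by omega)
  · have := hup (d - k)
    rwa [show k + (d - k) = d by omega] at this

/-- Double counting: sum of `C(|e|, s)` over edges is at most `C(m,s) * t'`. -/
lemma roman_count (m s t' : ℕ) (E : Multiset (Finset (Fin m)))
    (hlin : ∀ S : Finset (Fin m), S.card = s → Multiset.countP (fun e => S ⊆ e) E ≤ t') :
    (E.map (fun e => Nat.choose e.card s)).sum ≤ Nat.choose m s * t' := by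
  classical
  set U : Finset (Finset (Fin m)) := Finset.univ.powersetCard s with hU
  have hchoose : ∀ e : Finset (Fin m),
      Nat.choose e.card s = ∑ S ∈ U, (if S ⊆ e then 1 else 0) := by
    intro e
    rw [← Finset.card_powersetCard s e, ← Finset.card_filter]
    congr 1
    ext S
    simp only [hU, Finset.mem_powersetCard, Finset.mem_filter, Finset.subset_univ, true_and]
    tauto
  have hswap : ∀ F : Multiset (Finset (Fin m)), (F.map (fun e => Nat.choose e.card s)).sum
      = ∑ S ∈ U, Multiset.countP (fun e => S ⊆ e) F := by
    intro F
    induction F using Multiset.induction with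
    | empty => simp
    | cons a F ih =>
      simp only [Multiset.map_cons, Multiset.sum_cons, Multiset.countP_cons, ih, hchoose a]
      rw [Finset.sum_add_distrib]
      ring
  rw [hswap E]
  calc ∑ S ∈ U, Multiset.countP (fun e => S ⊆ e) E ≤ ∑ _S ∈ U, t' := by
        apply Finset.sum_le_sum
        intro S hS
        exact hlin S (Finset.mem_powersetCard.mp hS).2
    _ = Nat.choose m s * t' := by
        simp [hU, Finset.sum_const, Finset.card_powersetCard]

/-- Roman's bound: `z(m,n;s,t) ≤ (t-1)·C(m,s)/C(k,s-1) + (k+1)(s-1)n/s`, stated as the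
bound on the total degree of any hypergraph with `m` vertices and `n` edges in which every
`s`-subset of vertices is contained in at most `t-1` edges. -/
theorem stmt_5 (k s t m n : ℕ) (hk : 1 ≤ k) (hs : 2 ≤ s) (ht : 1 ≤ t)
    (hm : 1 ≤ m) (hn : 1 ≤ n) (hks : s - 1 ≤ k)
    (E : Multiset (Finset (Fin m))) (hcard : Multiset.card E = n)
    (hne : ∀ e ∈ E, e.Nonempty)
    (hlin : ∀ S : Finset (Fin m), S.card = s →
      Multiset.countP (fun e => S ⊆ e) E ≤ t - 1) :
    ((E.map Finset.card).sum : ℝ) ≤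
      (t - 1 : ℝ) * Nat.choose m s / Nat.choose k (s - 1) +
        (k + 1) * (s - 1) * n / s := by
  set r := s - 1 with hr
  have hsr : s = r + 1 := by omega
  have hr1 : 1 ≤ r := by omega
  have hCk : (0 : ℝ) < Nat.choose k r := by
    exact_mod_cast Nat.choose_pos hks
  have hs0 : (0 : ℝ) < s := by positivity
  -- per-edge real inequality
  have hedge : ∀ e : Finset (Fin m), (e.card : ℝ) ≤
      (Nat.choose e.card s : ℝ) / Nat.choose k r + ((k : ℝ) + 1) * r / s := by
    intro e
    have key := roman_key k r hks e.card
    have key' : (Nat.choose k r : ℝ) * ((r + 1) * e.card - (k + 1) * r)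
        ≤ (r + 1) * Nat.choose e.card (r + 1) := by exact_mod_cast key
    rw [hsr]
    push_cast
    push_cast at key'
    rw [div_add_div _ _ (ne_of_gt hCk) (by positivity : ((r : ℝ) + 1) ≠ 0),
      le_div_iff₀ (by positivity)]
    nlinarith [key', hCk]
  -- sum over edges
  have hsum1 : ((E.map Finset.card).sum : ℝ)
      = (E.map (fun e => (e.card : ℝ))).sum := by
    rw [Nat.cast_multiset_sum, Multiset.map_map]; rfl
  rw [hsum1]
  have hstep : (E.map (fun e => (e.card : ℝ))).sum ≤
      (E.map (fun e => (Nat.choose e.card s : ℝ) / Nat.choose k r + ((k : ℝ) + 1) * r / s)).sum :=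
    Multiset.sum_map_le_sum_map _ _ fun e _ => hedge e
  have hsplit : (E.map (fun e => (Nat.choose e.card s : ℝ) / Nat.choose k r
        + ((k : ℝ) + 1) * r / s)).sum
      = (E.map (fun e => (Nat.choose e.card s : ℝ))).sum / Nat.choose k r
        + n * (((k : ℝ) + 1) * r / s) := by
    rw [Multiset.sum_map_add]
    congr 1
    · simp only [div_eq_mul_inv, Multiset.sum_map_mul_right]
    · rw [Multiset.map_const', Multiset.sum_replicate, hcard]
      simp [nsmul_eq_mul]
  rw [hsplit] at hstep
  have hcount : (E.map (fun e => (Nat.choose e.card s : ℝ))).sum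
      ≤ (Nat.choose m s : ℝ) * (t - 1) := by
    have h := roman_count m s (t - 1) E hlin
    have h' : ((E.map (fun e => Nat.choose e.card s)).sum : ℝ)
        ≤ (Nat.choose m s : ℝ) * ((t - 1 : ℕ) : ℝ) := by exact_mod_cast h
    rw [Nat.cast_sub ht] at h'
    calc (E.map (fun e => (Nat.choose e.card s : ℝ))).sum
        = ((E.map (fun e => Nat.choose e.card s)).sum : ℝ) := by
          rw [Nat.cast_multiset_sum, Multiset.map_map]; rfl
      _ ≤ _ := by exact_mod_cast h'
  have hrs : ((s : ℝ) - 1) = (r : ℝ) := by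
    rw [hr, Nat.cast_sub (by omega : 1 ≤ s)]; simp
  rw [hrs]
  calc (E.map (fun e => (e.card : ℝ))).sum
      ≤ (E.map (fun e => (Nat.choose e.card s : ℝ))).sum / Nat.choose k r
        + n * (((k : ℝ) + 1) * r / s) := hstep
    _ ≤ ((t : ℝ) - 1) * Nat.choose m s / Nat.choose k r + ((k : ℝ) + 1) * r * n / s := by
        gcongr ?_ + ?_
        · rw [div_le_div_iff₀ hCk hCk]
          nlinarith [hcount, hCk]
        · rw [mul_div_assoc]; ring_nf; exact le_refl _
end

section
/- Fix integers s ≥ 2, k ≥ max{2, s²-2s}, and an integer α with 0 ≤ α ≤ k-s, and let β = ((s-1)(k-s+1) - α(s-1)) / ((k+1)(k-s+1) - α(s-1)). Define f(i) = (k+1)(s-1-β)/s + (binom(i,s-1)/binom(k,s-1))·((1-(s-1)β)(i-s+1)/s + β(k-s+2)(i-s+1-α)/(k-s+1-α)), where binom(i,s-1) is extended to real i via the falling factorial (i)(i-1)···(i-s+2)/(s-1)!. Then f(i) ≥ i for every integer i with s-1 ≤ i ≤ k-1. -/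
noncomputable def Ufun (k j i : ℕ) : ℝ :=
  ((k : ℝ) - i) * ((j : ℝ) + 1) * ((k - 1).descFactorial j : ℝ)
    - (k.descFactorial (j + 1) : ℝ) + (i.descFactorial (j + 1) : ℝ)

lemma Ustep (k j i : ℕ) (hji : j ≤ i) (hik : i + 1 ≤ k) :
    Ufun k j i = Ufun k j (i + 1)
      + ((j : ℝ) + 1) * (((k - 1).descFactorial j : ℝ) - (i.descFactorial j : ℝ)) := by
  unfold Ufun
  have h1 : ((i + 1).descFactorial (j + 1) : ℝ) = ((i : ℝ) + 1) * (i.descFactorial j : ℝ) := by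
    rw [Nat.succ_descFactorial_succ]; push_cast; ring
  have h2 : (i.descFactorial (j + 1) : ℝ) = ((i : ℝ) - j) * (i.descFactorial j : ℝ) := by
    rw [Nat.descFactorial_succ, Nat.cast_mul, Nat.cast_sub hji]
  rw [h1, h2]
  push_cast
  ring

lemma descFactorial_top (n j : ℕ) (h : 1 ≤ n) :
    n.descFactorial (j + 1) = n * (n - 1).descFactorial j := by
  obtain ⟨n', rfl⟩ : ∃ n', n = n' + 1 := ⟨n - 1, by omega⟩
  rw [Nat.succ_descFactorial_succ]; simp

lemma Uclaims (k m' : ℕ) (hk : m' + 2 ≤ k) :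
    ∀ n, n ≤ k - (m' + 1) →
      0 ≤ Ufun k m' (k - n) ∧
        ((k : ℝ) - m' - 2) * Ufun k m' (k - n) ≤ Ufun k (m' + 1) (k - n) := by
  intro n
  induction n with
  | zero =>
    intro _
    have h0 : ∀ j, Ufun k j k = 0 := by intro j; unfold Ufun; ring
    simp only [Nat.sub_zero, h0]
    norm_num
  | succ n ih =>
    intro hn
    obtain ⟨h1, h2⟩ := ih (by omega)
    have hsucc : (k - (n + 1)) + 1 = k - n := by omega
    set i := k - (n + 1) with hidef
    have hik : i + 1 ≤ k := by omega
    have hmi : m' + 1 ≤ i := by omega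
    have hik1 : i ≤ k - 1 := by omega
    rw [← hsucc] at h1 h2
    have mono0 : (i.descFactorial m' : ℝ) ≤ ((k - 1).descFactorial m' : ℝ) := by
      exact_mod_cast Nat.descFactorial_le _ hik1
    have e0nn : (0 : ℝ) ≤ (i.descFactorial m' : ℝ) := by positivity
    have s0 := Ustep k m' i (by omega) hik
    have s1 := Ustep k (m' + 1) i (by omega) hik
    push_cast at s1
    have hD1 : ((k - 1).descFactorial (m' + 1) : ℝ)
        = ((k : ℝ) - 1 - m') * ((k - 1).descFactorial m' : ℝ) := by
      rw [Nat.descFactorial_succ, Nat.cast_mul,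
        show k - 1 - m' = k - (1 + m') by omega, Nat.cast_sub (by omega)]
      push_cast; ring
    have hDi : (i.descFactorial (m' + 1) : ℝ)
        = ((i : ℝ) - m') * (i.descFactorial m' : ℝ) := by
      rw [Nat.descFactorial_succ, Nat.cast_mul, Nat.cast_sub (by omega)]
    have hiR : (i : ℝ) + 1 ≤ (k : ℝ) := by exact_mod_cast hik
    have hmiR : (m' : ℝ) + 1 ≤ (i : ℝ) := by exact_mod_cast hmi
    constructor
    · rw [s0]
      have : (0 : ℝ) ≤ ((m' : ℝ) + 1) *
          (((k - 1).descFactorial m' : ℝ) - (i.descFactorial m' : ℝ)) := by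
        apply mul_nonneg (by positivity); linarith
      linarith
    · rw [s0, s1]
      have key : ((k : ℝ) - m' - 2) * (((m' : ℝ) + 1) *
            (((k - 1).descFactorial m' : ℝ) - (i.descFactorial m' : ℝ)))
          ≤ (((m' : ℝ) + 1) + 1) *
            (((k - 1).descFactorial (m' + 1) : ℝ) - (i.descFactorial (m' + 1) : ℝ)) := by
        rw [hD1, hDi]
        nlinarith [mul_nonneg (sub_nonneg.mpr mono0) (show (0 : ℝ) ≤ (k : ℝ) by positivity),
          mul_nonneg (mul_nonneg (show (0 : ℝ) ≤ (m' : ℝ) + 2 by positivity)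
            (show (0 : ℝ) ≤ (k : ℝ) - 1 - i by linarith)) e0nn]
      nlinarith [h2, key]


set_option maxHeartbeats 2000000 in
/-- With `β` as in the main theorem, the coefficient function
`f(i) = (k+1)(s-1-β)/s + (C(i,s-1)/C(k,s-1))·((1-(s-1)β)(i-s+1)/s
       + β(k-s+2)(i-s+1-α)/(k-s+1-α))` satisfies `f(i) ≥ i` for every integer
`i` with `s-1 ≤ i ≤ k-1`. -/
theorem stmt_9 (s k α : ℕ) (hs : 2 ≤ s) (hk : max 2 (s ^ 2 - 2 * s) ≤ k)
    (hα : α ≤ k - s)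
    (β : ℝ)
    (hβ : β = (((s : ℝ) - 1) * ((k : ℝ) - s + 1) - α * ((s : ℝ) - 1)) /
               (((k : ℝ) + 1) * ((k : ℝ) - s + 1) - α * ((s : ℝ) - 1)))
    (i : ℕ) (hi1 : s - 1 ≤ i) (hi2 : i ≤ k - 1) :
    (i : ℝ) ≤
      ((k : ℝ) + 1) * ((s : ℝ) - 1 - β) / s +
        ((Nat.choose i (s - 1) : ℝ) / (Nat.choose k (s - 1) : ℝ)) *
          ((1 - ((s : ℝ) - 1) * β) * ((i : ℝ) - s + 1) / s +
            β * ((k : ℝ) - s + 2) * ((i : ℝ) - s + 1 - α) / ((k : ℝ) - s + 1 - α)) := by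
  -- basic numeric facts
  have hk2 : 2 ≤ k := le_trans (le_max_left _ _) hk
  have hks' : s ^ 2 - 2 * s ≤ k := le_trans (le_max_right _ _) hk
  set m' : ℕ := s - 2 with hm'def
  have hm'2 : s = m' + 2 := by omega
  have hkq : m' * m' + 2 * m' ≤ k := by
    have e1 : s ^ 2 = m' * m' + 4 * m' + 4 := by rw [hm'2]; ring
    rw [e1] at hks'; omega
  have hmk : m' + 2 ≤ k := by
    rcases Nat.eq_zero_or_pos m' with h | h
    · omega
    · have : m' ≤ m' * m' := Nat.le_mul_of_pos_left m' h
      omega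
  have hαk : α + m' + 2 ≤ k := by omega
  have hmi : m' + 1 ≤ i := by omega
  have hik : i + 1 ≤ k := by omega
  have hm'1 : s - 1 = m' + 1 := by omega
  -- real casts
  have hsR : (s : ℝ) = (m' : ℝ) + 2 := by rw [hm'2]; push_cast; ring
  have hαR : (α : ℝ) ≤ (k : ℝ) - m' - 2 := by
    have : (α : ℝ) + m' + 2 ≤ (k : ℝ) := by exact_mod_cast hαk
    linarith
  have hαnn : (0 : ℝ) ≤ (α : ℝ) := by positivity
  have hkmR : (m' : ℝ) + 2 ≤ (k : ℝ) := by exact_mod_cast hmk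
  have hiR : (i : ℝ) + 1 ≤ (k : ℝ) := by exact_mod_cast hik
  have hmiR : (m' : ℝ) + 1 ≤ (i : ℝ) := by exact_mod_cast hmi
  have hkqR : (m' : ℝ) * m' + 2 * m' ≤ (k : ℝ) := by exact_mod_cast hkq
  have hm'nn : (0 : ℝ) ≤ (m' : ℝ) := by positivity
  -- descFactorial facts
  have hd0posN : 0 < (k - 1).descFactorial m' := by
    apply Nat.pos_of_ne_zero
    intro h
    have := Nat.descFactorial_eq_zero_iff_lt.mp h
    omega
  set d0 : ℝ := ((k - 1).descFactorial m' : ℝ) with hd0def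
  set e0 : ℝ := (i.descFactorial m' : ℝ) with he0def
  have hd0 : 0 < d0 := by rw [hd0def]; exact_mod_cast hd0posN
  have he0 : 0 ≤ e0 := by rw [he0def]; positivity
  have hDk : (k.descFactorial (m' + 1) : ℝ) = (k : ℝ) * d0 := by
    rw [descFactorial_top k m' (by omega)]; push_cast; ring
  have hDi : (i.descFactorial (m' + 1) : ℝ) = ((i : ℝ) - m') * e0 := by
    rw [Nat.descFactorial_succ, Nat.cast_mul, Nat.cast_sub (by omega)]
  have hD1 : ((k - 1).descFactorial (m' + 1) : ℝ) = ((k : ℝ) - 1 - m') * d0 := by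
    rw [Nat.descFactorial_succ, Nat.cast_mul,
      show k - 1 - m' = k - (1 + m') by omega, Nat.cast_sub (by omega)]
    push_cast; ring
  have hDk2 : (k.descFactorial (m' + 2) : ℝ) = (k : ℝ) * (((k : ℝ) - 1 - m') * d0) := by
    rw [descFactorial_top k (m' + 1) (by omega), Nat.cast_mul, hD1]
  have hDi2 : (i.descFactorial (m' + 2) : ℝ) = ((i : ℝ) - m' - 1) * (((i : ℝ) - m') * e0) := by
    rw [show m' + 2 = (m' + 1) + 1 from rfl, Nat.descFactorial_succ, Nat.cast_mul,
      Nat.cast_sub (by omega), hDi]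
    push_cast; ring
  -- choose ratio
  have hchoose : ((i.choose (m' + 1) : ℝ)) / (k.choose (m' + 1) : ℝ)
      = (((i : ℝ) - m') * e0) / ((k : ℝ) * d0) := by
    rw [← hDk, ← hDi, Nat.descFactorial_eq_factorial_mul_choose,
      Nat.descFactorial_eq_factorial_mul_choose]
    push_cast
    rw [mul_div_mul_left _ _ (by positivity : ((Nat.factorial (m' + 1) : ℕ) : ℝ) ≠ 0)]
  -- U expansions
  have hU0eq : Ufun k m' i
      = ((k : ℝ) - i) * ((m' : ℝ) + 1) * d0 - (k : ℝ) * d0 + ((i : ℝ) - m') * e0 := by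
    unfold Ufun; rw [hDk, hDi]
  have hU1eq : Ufun k (m' + 1) i
      = ((k : ℝ) - i) * ((m' : ℝ) + 2) * (((k : ℝ) - 1 - m') * d0)
        - (k : ℝ) * (((k : ℝ) - 1 - m') * d0)
        + ((i : ℝ) - m' - 1) * (((i : ℝ) - m') * e0) := by
    unfold Ufun
    rw [show (m' + 1) + 1 = m' + 2 from rfl, hDk2, hDi2, hD1]
    push_cast; ring
  -- the U inequalities
  obtain ⟨hU0nn, hU10⟩ := by
    have h := Uclaims k m' hmk (k - i) (by omega)
    rwa [show k - (k - i) = i by omega] at h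
  -- β facts
  have hden : 0 < ((k : ℝ) + 1) * ((k : ℝ) - s + 1) - α * ((s : ℝ) - 1) := by
    rw [hsR]
    linarith [mul_nonneg (show (0 : ℝ) ≤ (k : ℝ) - m' - 2 - α by linarith)
        (show (0 : ℝ) ≤ (m' : ℝ) + 1 by positivity),
      mul_nonneg (show (0 : ℝ) ≤ (k : ℝ) - m' - 2 by linarith)
        (show (0 : ℝ) ≤ (k : ℝ) - m' by linarith)]
  have hβnn : 0 ≤ β := by
    rw [hβ]
    apply div_nonneg _ (le_of_lt hden)
    rw [hsR]
    linarith [mul_nonneg (show (0 : ℝ) ≤ (m' : ℝ) + 1 by positivity)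
      (show (0 : ℝ) ≤ (k : ℝ) - m' - 2 - α by linarith)]
  have hβ1 : ((s : ℝ) - 1) * β ≤ 1 := by
    rw [hβ, ← mul_div_assoc, div_le_one hden, hsR]
    have hq1 : ((m' : ℝ) + 1) * ((m' : ℝ) + 1) * ((k : ℝ) - m' - 1 - α)
        ≤ ((k : ℝ) + 1) * ((k : ℝ) - m' - 1 - α) :=
      mul_le_mul_of_nonneg_right (by linarith [hkqR]) (by linarith)
    have hq2 : (α : ℝ) * ((m' : ℝ) + 1) ≤ (α : ℝ) * ((k : ℝ) + 1) :=
      mul_le_mul_of_nonneg_left (by linarith) hαnn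
    linarith [hq1, hq2]
  -- coefficient values
  set c : ℝ := ((k : ℝ) + 1) * ((s : ℝ) - 1 - β) / s with hcdef
  set A : ℝ := (1 - ((s : ℝ) - 1) * β) / s with hAdef
  set B : ℝ := β * ((k : ℝ) - s + 2) / ((k : ℝ) - s + 1 - α) with hBdef
  have hspos : (0 : ℝ) < (s : ℝ) := by rw [hsR]; positivity
  have hdenB : (0 : ℝ) < (k : ℝ) - s + 1 - α := by rw [hsR]; linarith
  have hAnn : 0 ≤ A := by rw [hAdef]; apply div_nonneg (by linarith) (le_of_lt hspos)
  have hBnn : 0 ≤ B := by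
    rw [hBdef]
    exact div_nonneg (mul_nonneg hβnn (by rw [hsR]; linarith)) (le_of_lt hdenB)
  have hkd0 : (0 : ℝ) < (k : ℝ) * d0 := by positivity
  have hkd0' : ((k : ℝ) * d0) ≠ 0 := ne_of_gt hkd0
  -- the two scalar identities encoding g(k) = 0 and g(k-1) = 0
  have h4 : ((k : ℝ) - s + 1 - α) ≠ 0 := ne_of_gt hdenB
  have h5 : (((k : ℝ) + 1) * ((k : ℝ) - s + 1) - α * ((s : ℝ) - 1)) ≠ 0 := ne_of_gt hden
  have hs0 : ((s : ℝ)) ≠ 0 := ne_of_gt hspos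
  have hco1 : (k : ℝ) = A * ((k : ℝ) - 1 - m') * ((m' : ℝ) + 2)
      + B * (((k : ℝ) - 1 - m') * ((m' : ℝ) + 2) - α * ((m' : ℝ) + 1)) := by
    rw [hAdef, hBdef, hβ]
    rw [hsR] at h4 h5 ⊢
    have h5a : ((k : ℝ) - (m' + 2) + 1) * ((k : ℝ) + 1) - ((m' : ℝ) + 2 - 1) * α ≠ 0 :=
      fun h => h5 (by linear_combination h)
    have h5b : ((k : ℝ) + 1) * ((k : ℝ) - (m' + 2) + 1) - ((m' : ℝ) + 2 - 1) * α ≠ 0 :=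
      fun h => h5 (by linear_combination h)
    field_simp
    ring
  have hco2 : c = A * ((k : ℝ) - 1 - m') * ((m' : ℝ) + 1)
      + B * (((k : ℝ) - 1 - m') * ((m' : ℝ) + 1) - α * (m' : ℝ)) := by
    rw [hcdef, hAdef, hBdef, hβ]
    rw [hsR] at h4 h5 ⊢
    have h5a : ((k : ℝ) - (m' + 2) + 1) * ((k : ℝ) + 1) - ((m' : ℝ) + 2 - 1) * α ≠ 0 :=
      fun h => h5 (by linear_combination h)
    have h5b : ((k : ℝ) + 1) * ((k : ℝ) - (m' + 2) + 1) - ((m' : ℝ) + 2 - 1) * α ≠ 0 :=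
      fun h => h5 (by linear_combination h)
    field_simp
    ring
  -- bracket identity
  have hbr : (A + B) * Ufun k (m' + 1) i - B * α * Ufun k m' i
      - (((i : ℝ) - m') * e0) * (A * ((i : ℝ) - s + 1) + B * ((i : ℝ) - s + 1 - α))
      = (c - i) * ((k : ℝ) * d0) := by
    rw [hU1eq, hU0eq, hsR]
    linear_combination ((i : ℝ) * d0) * hco1 - ((k : ℝ) * d0) * hco2
  -- final combination
  have hnum : B * α ≤ ((k : ℝ) - m' - 2) * (A + B) := by
    linarith [mul_le_mul_of_nonneg_left hαR hBnn,
      mul_nonneg (show (0 : ℝ) ≤ (k : ℝ) - m' - 2 by linarith) hAnn]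
  have hXnn : 0 ≤ (A + B) / ((k : ℝ) * d0) := by positivity
  have hYX : B * α / ((k : ℝ) * d0) ≤ ((k : ℝ) - m' - 2) * ((A + B) / ((k : ℝ) * d0)) := by
    have h := mul_le_mul_of_nonneg_right hnum (inv_nonneg.mpr hkd0.le)
    rw [mul_div_assoc, div_eq_mul_inv, div_eq_mul_inv]
    linarith [h]
  have hfinal : 0 ≤ ((A + B) / ((k : ℝ) * d0)) * Ufun k (m' + 1) i
      - (B * α / ((k : ℝ) * d0)) * Ufun k m' i := by
    linarith [mul_le_mul_of_nonneg_left hU10 hXnn,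
      mul_le_mul_of_nonneg_right hYX hU0nn]
  -- assemble
  rw [hm'1, hchoose]
  have hE : c + ((((i : ℝ) - m') * e0) / ((k : ℝ) * d0)) *
        ((1 - ((s : ℝ) - 1) * β) * ((i : ℝ) - s + 1) / s +
          β * ((k : ℝ) - s + 2) * ((i : ℝ) - s + 1 - α) / ((k : ℝ) - s + 1 - α))
      = c + ((((i : ℝ) - m') * e0) / ((k : ℝ) * d0)) *
          (A * ((i : ℝ) - s + 1) + B * ((i : ℝ) - s + 1 - α)) := by
    rw [hAdef, hBdef]; ring
  rw [hE]
  have e1 : ((A + B) / ((k : ℝ) * d0)) * Ufun k (m' + 1) i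
        - (B * α / ((k : ℝ) * d0)) * Ufun k m' i
        - (c + ((((i : ℝ) - m') * e0) / ((k : ℝ) * d0)) *
            (A * ((i : ℝ) - s + 1) + B * ((i : ℝ) - s + 1 - α)) - (i : ℝ))
      = ((A + B) * Ufun k (m' + 1) i - B * α * Ufun k m' i
          - (((i : ℝ) - m') * e0) * (A * ((i : ℝ) - s + 1) + B * ((i : ℝ) - s + 1 - α)))
          / ((k : ℝ) * d0) - (c - i) := by
    ring
  rw [hbr, mul_div_cancel_right₀ _ hkd0'] at e1
  linarith [hfinal, e1]
end

section
/- Fix integers s ≥ 2, k ≥ max{2, s²-2s}, m ≥ k+2, and an integer α with 0 ≤ α ≤ k-s, and let β = ((s-1)(k-s+1) - α(s-1)) / ((k+1)(k-s+1) - α(s-1)). Define g(i) = (k+1)(s-1-β)/s + (binom(i,s-1)/binom(k,s-1))·((1-(s-1)β)(i-s+1)/s + β(k-s+2)). Then g(i) ≥ i for every integer i with k ≤ i ≤ m. -/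
/-!
Write `γ = (s-1)β`; the hypotheses on `α` and `k` give `0 ≤ γ ≤ 1` and `β ≥ 0`. Clearly `g(k) = k`,
so it suffices that `g(j+1) - g(j) ≥ 1` for `j ≥ k`. By Pascal's rule
`C(j+1,s-1)(j-s+2) = C(j,s-1)(j+1)`, this difference equals
`C(j,s-1)((1-γ)(j-s+2) + γ(k-s+2)) / (C(k,s-1)(j-s+2))`, a convex combination of
`C(j,s-1)/C(k,s-1) ≥ 1` and `C(j,s-1)(k-s+2) / (C(k,s-1)(j-s+2)) ≥ 1`.
-/

noncomputable def coeffG (s k : ℕ) (β : ℝ) (i : ℕ) : ℝ :=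
  ((k : ℝ) + 1) * ((s : ℝ) - 1 - β) / s +
    ((Nat.choose i (s - 1) : ℝ) / (Nat.choose k (s - 1) : ℝ)) *
      ((1 - ((s : ℝ) - 1) * β) * ((i : ℝ) - s + 1) / s + β * ((k : ℝ) - s + 2))

noncomputable def betaOf (s k α : ℝ) : ℝ :=
  ((s - 1) * (k - s + 1) - α * (s - 1)) / ((k + 1) * (k - s + 1) - α * (s - 1))

section Beta

variable {s k α : ℝ}

lemma betaOf_denom_pos (hs : 1 ≤ s) (hα0 : 0 ≤ α) (hαk : α ≤ k - s) :
    0 < (k + 1) * (k - s + 1) - α * (s - 1) := by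
  nlinarith [mul_le_mul_of_nonneg_right hαk (sub_nonneg.2 hs)]

lemma betaOf_nonneg (hs : 1 ≤ s) (hα0 : 0 ≤ α) (hαk : α ≤ k - s) : 0 ≤ betaOf s k α := by
  refine div_nonneg ?_ (betaOf_denom_pos hs hα0 hαk).le
  nlinarith [mul_nonneg (sub_nonneg.2 hs) (by linarith : 0 ≤ k - s + 1 - α)]

lemma sub_one_mul_betaOf_le_one (hs : 2 ≤ s) (hk : s ^ 2 ≤ k + 2 * s) (hα0 : 0 ≤ α)
    (hαk : α ≤ k - s) : (s - 1) * betaOf s k α ≤ 1 := by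
  rw [betaOf, ← mul_div_assoc, div_le_one (betaOf_denom_pos (by linarith) hα0 hαk)]
  -- the gap is `(k-s+1)(k+1-(s-1)²) + α(s-1)(s-2)`
  nlinarith [mul_nonneg (by linarith : 0 ≤ k - s + 1) (by linarith : 0 ≤ k + 1 - (s - 1) ^ 2),
    mul_nonneg (mul_nonneg hα0 (by linarith : 0 ≤ s - 1)) (by linarith : 0 ≤ s - 2)]

end Beta

lemma Nat.choose_succ_mul_sub_le (t : ℕ) {k j : ℕ} (h : k ≤ j) :
    k.choose (t + 1) * (j - t) ≤ j.choose (t + 1) * (k - t) := by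
  refine Nat.le_of_mul_le_mul_right ?_ t.succ_pos
  calc k.choose (t + 1) * (j - t) * (t + 1) = k.choose t * (k - t) * (j - t) := by
        rw [mul_right_comm, Nat.choose_succ_right_eq]
    _ ≤ j.choose t * (j - t) * (k - t) := by
        rw [mul_right_comm]; gcongr
    _ = j.choose (t + 1) * (k - t) * (t + 1) := by
        rw [mul_right_comm (j.choose (t + 1)), Nat.choose_succ_right_eq, mul_right_comm]

lemma natCast_le_of_one_le_sub {f : ℕ → ℝ} {k : ℕ} (hk : (k : ℝ) ≤ f k)
    (hstep : ∀ j, k ≤ j → 1 ≤ f (j + 1) - f j) {i : ℕ} (hi : k ≤ i) : (i : ℝ) ≤ f i := by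
  induction i, hi using Nat.le_induction with
  | base => exact hk
  | succ j hj ih => push_cast; linarith [hstep j hj]

section CoeffG

variable {s k : ℕ} {β : ℝ}

lemma coeffG_self (hs : 1 ≤ s) (hsk : s ≤ k + 1) : coeffG s k β k = k := by
  have hc : (k.choose (s - 1) : ℝ) ≠ 0 := by
    exact_mod_cast (Nat.choose_pos (by omega)).ne'
  have hs' : (s : ℝ) ≠ 0 := by positivity
  rw [coeffG, div_self hc, one_mul]
  field_simp
  ring

lemma one_le_coeffG_succ_sub (hs : 2 ≤ s) (hsk : s ≤ k + 1) (hβ0 : 0 ≤ β)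
    (hβ1 : ((s : ℝ) - 1) * β ≤ 1) {j : ℕ} (hj : k ≤ j) :
    1 ≤ coeffG s k β (j + 1) - coeffG s k β j := by
  obtain ⟨t, rfl⟩ : ∃ t, s = t + 2 := ⟨s - 2, by omega⟩
  have hst : t + 2 - 1 = t + 1 := rfl
  set γ := ((t + 2 : ℕ) - 1 : ℝ) * β with hγ
  have hγ0 : 0 ≤ γ := mul_nonneg (by push_cast; linarith) hβ0
  have hγ1 : 0 ≤ 1 - γ := sub_nonneg.2 hβ1
  set c : ℝ := (k.choose (t + 1) : ℝ) with hc_def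
  set C : ℝ := (j.choose (t + 1) : ℝ) with hC_def
  have hc : 0 < c := Nat.cast_pos.2 (Nat.choose_pos (by omega))
  have hjt : (0 : ℝ) < j - t := by
    have : (t : ℝ) < j := by exact_mod_cast (by omega : t < j)
    linarith
  have hmono : c ≤ C := Nat.cast_le.2 (Nat.choose_le_choose _ hj)
  have hratio : c * (j - t) ≤ C * (k - t) := by
    have := Nat.cast_le (α := ℝ) |>.2 (Nat.choose_succ_mul_sub_le t hj)
    push_cast [Nat.cast_sub (by omega : t ≤ j), Nat.cast_sub (by omega : t ≤ k)] at this
    exact this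
  have hpascal : ((j + 1).choose (t + 1) : ℝ) = C * (j + 1) / (j - t) := by
    rw [eq_div_iff hjt.ne']
    have := Nat.choose_mul_succ_eq j (t + 1)
    rw [Nat.add_sub_add_right] at this
    have := congrArg (Nat.cast : ℕ → ℝ) this
    push_cast [Nat.cast_sub (by omega : t ≤ j)] at this
    linarith
  have hdiff : coeffG (t + 2) k β (j + 1) - coeffG (t + 2) k β j =
      C * ((1 - γ) * (j - t) + γ * (k - t)) / (c * (j - t)) := by
    simp only [coeffG, hst]
    rw [hpascal, ← hc_def, ← hC_def, hγ]
    field_simp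
    push_cast
    ring
  rw [hdiff, le_div_iff₀ (by positivity), one_mul]
  calc c * (j - t) = (1 - γ) * (c * (j - t)) + γ * (c * (j - t)) := by ring
    _ ≤ (1 - γ) * (C * (j - t)) + γ * (C * (k - t)) := by gcongr
    _ = C * ((1 - γ) * (j - t) + γ * (k - t)) := by ring

lemma natCast_le_coeffG (hs : 2 ≤ s) (hsk : s ≤ k + 1) (hβ0 : 0 ≤ β)
    (hβ1 : ((s : ℝ) - 1) * β ≤ 1) {i : ℕ} (hi : k ≤ i) : (i : ℝ) ≤ coeffG s k β i :=
  natCast_le_of_one_le_sub (coeffG_self (by omega) hsk).ge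
    (fun _ hj ↦ one_le_coeffG_succ_sub hs hsk hβ0 hβ1 hj) hi

end CoeffG

theorem stmt_11_general (s k α : ℕ) (hs : 2 ≤ s) (hk : max 2 (s ^ 2 - 2 * s) ≤ k)
    (hα : α ≤ k - s)
    (β : ℝ)
    (hβ : β = (((s : ℝ) - 1) * ((k : ℝ) - s + 1) - α * ((s : ℝ) - 1)) /
               (((k : ℝ) + 1) * ((k : ℝ) - s + 1) - α * ((s : ℝ) - 1)))
    (i : ℕ) (hi1 : k ≤ i) :
    (i : ℝ) ≤
      ((k : ℝ) + 1) * ((s : ℝ) - 1 - β) / s +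
        ((Nat.choose i (s - 1) : ℝ) / (Nat.choose k (s - 1) : ℝ)) *
          ((1 - ((s : ℝ) - 1) * β) * ((i : ℝ) - s + 1) / s + β * ((k : ℝ) - s + 2)) := by
  have hk2 : 2 ≤ k := le_of_max_le_left hk
  have hsq : s ^ 2 ≤ k + 2 * s := Nat.sub_le_iff_le_add.mp (le_of_max_le_right hk)
  have hsk : s ≤ k := by nlinarith
  have hαk : (α : ℝ) ≤ k - s := by
    rw [le_sub_iff_add_le]; exact_mod_cast (by omega : α + s ≤ k)
  have hs' : (2 : ℝ) ≤ s := by exact_mod_cast hs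
  have hsq' : (s : ℝ) ^ 2 ≤ k + 2 * s := by exact_mod_cast hsq
  subst hβ
  exact natCast_le_coeffG hs (by omega) (betaOf_nonneg (by linarith) α.cast_nonneg hαk)
    (sub_one_mul_betaOf_le_one hs' hsq' α.cast_nonneg hαk) hi1

/-- With `β` as in the main theorem, the coefficient function
`g(i) = (k+1)(s-1-β)/s + (C(i,s-1)/C(k,s-1))·((1-(s-1)β)(i-s+1)/s + β(k-s+2))`
satisfies `g(i) ≥ i` for every integer `i` with `k ≤ i ≤ m`, where `m ≥ k+2`. -/
theorem stmt_11 (s k m α : ℕ) (hs : 2 ≤ s) (hk : max 2 (s ^ 2 - 2 * s) ≤ k)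
    (hm : k + 2 ≤ m) (hα : α ≤ k - s)
    (β : ℝ)
    (hβ : β = (((s : ℝ) - 1) * ((k : ℝ) - s + 1) - α * ((s : ℝ) - 1)) /
               (((k : ℝ) + 1) * ((k : ℝ) - s + 1) - α * ((s : ℝ) - 1)))
    (i : ℕ) (hi1 : k ≤ i) (hi2 : i ≤ m) :
    (i : ℝ) ≤
      ((k : ℝ) + 1) * ((s : ℝ) - 1 - β) / s +
        ((Nat.choose i (s - 1) : ℝ) / (Nat.choose k (s - 1) : ℝ)) *
          ((1 - ((s : ℝ) - 1) * β) * ((i : ℝ) - s + 1) / s + β * ((k : ℝ) - s + 2)) :=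
  stmt_11_general s k α hs hk hα β hβ i hi1
end

section
/- For nonnegative real numbers n_{s-1}, ..., n_m satisfying (i) Σ_{i=s-1}^m n_i = n, (ii) Σ_{i=s-1}^m binom(i,s)·n_i ≤ (t-1)·binom(m,s), and (iii) Σ_{i=s-1}^{k-1} ((i-s+1-α)/(k-s+1-α))·binom(i,s-1)·n_i + Σ_{i=k}^m binom(i,s-1)·n_i ≤ binom(m,s-1)·((t-1)(m-s+1)-α)/(k-s+1), where s ≥ 2, k ≥ max{2,s²-2s}, s ≤ k ≤ m are integers and α is the residue of (t-1)(m-s+1) modulo k-s+1 with 0 ≤ α ≤ k-s, we have Σ_{i=s-1}^m i·n_i ≤ B_k(m,n;s,t), where B_k(m,n;s,t) = (binom(m,s-1)/binom(k,s-1))·((t-1)(m-s+1)/s·(β(k+1)/(k-s+1)+1) - αβ(k-s+2)/(k-s+1)) + (k+1)(s-1-β)n/s with β = ((s-1)(k-s+1)-α(s-1))/((k+1)(k-s+1)-α(s-1)). -/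
/-!
Weak linear-programming duality. Adding `A·(i) + B·(ii) + C·(iii)` bounds `∑ cᵢ nᵢ` by the
claimed value, where `cᵢ = g i = A + B·C(i,s) + C·C(i,s-1)` for `i ≥ k` and
`cᵢ = f i = A + B·C(i,s) + C·wᵢ·C(i,s-1)` for `i < k`, with `wᵢ = (i-s+1-α)/(k-s+1-α)`; it
remains to see `i ≤ cᵢ`. Both `f` and `g` take the value `k` at `k`. By Pascal's rule the
increment of `g` is `B·C(i,s-1) + C·C(i,s-2)`, increasing in `i` and equal to `1` at `i = k`, so
`g i ≥ i` above `k`. The increment of `f` is at most its value at `k - 1`, which `β` is chosen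
to make `1`, so `f i ≥ i` below `k`. Nonnegativity of `B` and `C` amounts to
`0 ≤ β ≤ 1/(s-1)`, and the upper bound is where `k ≥ s² - 2s` enters.
-/

open Finset

lemma cast_choose_succ_left (n : ℕ) {r : ℕ} (hr : 0 < r) :
    ((n + 1).choose r : ℝ) = n.choose (r - 1) + n.choose r := by
  exact_mod_cast Nat.choose_succ_left n r hr

lemma cast_choose_mul (n : ℕ) {r : ℕ} (hr : 0 < r) :
    (n.choose r : ℝ) * r = n.choose (r - 1) * (n - r + 1) := by
  obtain ⟨r, rfl⟩ : ∃ r', r = r' + 1 := ⟨r - 1, by omega⟩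
  rcases le_or_gt r n with hrn | hnr
  · have h : ((n.choose (r + 1) * (r + 1) : ℕ) : ℝ) = (n.choose r * (n - r) : ℕ) :=
      congrArg _ (Nat.choose_succ_right_eq n r)
    push_cast [Nat.cast_sub hrn] at h ⊢
    linarith
  · simp [Nat.choose_eq_zero_of_lt hnr, Nat.choose_eq_zero_of_lt (hnr.trans (Nat.lt_succ_self r))]

lemma natCast_le_of_le_of_add_one_le {h : ℕ → ℝ} {k : ℕ} (hk : (k : ℝ) ≤ h k)
    (hstep : ∀ i, k ≤ i → h i + 1 ≤ h (i + 1)) {i : ℕ} (hi : k ≤ i) : (i : ℝ) ≤ h i := by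
  induction i, hi using Nat.le_induction with
  | base => exact hk
  | succ i hi ih => push_cast; linarith [hstep i hi]

lemma natCast_le_of_le_of_le_add_one {h : ℕ → ℝ} {k : ℕ} (hk : (k : ℝ) ≤ h k)
    (hstep : ∀ i < k, h (i + 1) ≤ h i + 1) {i : ℕ} (hi : i ≤ k) : (i : ℝ) ≤ h i := by
  induction hi using Nat.decreasingInduction with
  | self => exact hk
  | of_succ i hi ih => push_cast at ih; linarith [hstep i hi]

lemma sum_mul_le_of_le_affine {ι : Type*} (S : Finset ι) {x c u v : ι → ℝ} {A B C : ℝ}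
    (hx : ∀ i ∈ S, 0 ≤ x i) (hc : ∀ i ∈ S, c i ≤ A + B * u i + C * v i) :
    ∑ i ∈ S, c i * x i ≤
      A * ∑ i ∈ S, x i + B * ∑ i ∈ S, u i * x i + C * ∑ i ∈ S, v i * x i := by
  simp only [mul_sum, ← sum_add_distrib]
  exact sum_le_sum fun i hi => by nlinarith [mul_le_mul_of_nonneg_right (hc i hi) (hx i hi)]

lemma sum_Icc_eq_sum_Icc_pred_add_sum_Icc {M : Type*} [AddCommMonoid M] (f : ℕ → M)
    {a k m : ℕ} (hak : a ≤ k) (hk : 0 < k) (hkm : k ≤ m + 1) :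
    ∑ i ∈ Icc a m, f i = ∑ i ∈ Icc a (k - 1), f i + ∑ i ∈ Icc k m, f i := by
  rw [← sum_union (disjoint_left.2 fun i hi hi' => by simp only [mem_Icc] at hi hi'; omega)]
  congr 1
  ext i
  simp only [mem_union, mem_Icc]
  omega

lemma natCast_le_affine_choose {k s : ℕ} {A B C : ℝ} (hs : 2 ≤ s) (hB : 0 ≤ B) (hC : 0 ≤ C)
    (hbase : (k : ℝ) ≤ A + B * k.choose s + C * k.choose (s - 1))
    (hslope : 1 ≤ B * k.choose (s - 1) + C * k.choose (s - 2)) {i : ℕ} (hi : k ≤ i) :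
    (i : ℝ) ≤ A + B * i.choose s + C * i.choose (s - 1) := by
  refine natCast_le_of_le_of_add_one_le
    (h := fun i => A + B * i.choose s + C * i.choose (s - 1)) hbase (fun i hi => ?_) hi
  have pascal := cast_choose_succ_left i (r := s) (by omega)
  have pascal' := cast_choose_succ_left i (r := s - 1) (by omega)
  rw [show s - 1 - 1 = s - 2 by omega] at pascal'
  have mono : (k.choose (s - 1) : ℝ) ≤ i.choose (s - 1) := by
    exact_mod_cast Nat.choose_le_choose _ hi
  have mono' : (k.choose (s - 2) : ℝ) ≤ i.choose (s - 2) := by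
    exact_mod_cast Nat.choose_le_choose _ hi
  simp only [pascal, pascal']
  nlinarith [mul_le_mul_of_nonneg_left mono hB, mul_le_mul_of_nonneg_left mono' hC]

lemma natCast_le_affine_weighted_choose {k s : ℕ} {A B C a : ℝ} (hs : 2 ≤ s) (hB : 0 ≤ B)
    (hC : 0 ≤ C) (hD : 0 < (k : ℝ) - s + 1 - a)
    (hbase : (k : ℝ) ≤ A + B * k.choose s + C * k.choose (s - 1))
    (hslope : B * (k - 1).choose (s - 1) +
      C * ((k - 1).choose (s - 2) + (k - 1).choose (s - 1) / ((k : ℝ) - s + 1 - a)) ≤ 1)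
    {i : ℕ} (hi : i ≤ k) :
    (i : ℝ) ≤ A + B * i.choose s +
      C * (((i : ℝ) - s + 1 - a) / ((k : ℝ) - s + 1 - a) * i.choose (s - 1)) := by
  set D := (k : ℝ) - s + 1 - a
  set w : ℕ → ℝ := fun j => ((j : ℝ) - s + 1 - a) / D with hw
  have w_self : w k = 1 := div_self hD.ne'
  refine natCast_le_of_le_of_le_add_one
    (h := fun i => A + B * i.choose s + C * (w i * i.choose (s - 1)))
    (by simpa only [w_self, one_mul] using hbase) (fun i hi => ?_) hi
  have pascal := cast_choose_succ_left i (r := s) (by omega)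
  have pascal' := cast_choose_succ_left i (r := s - 1) (by omega)
  rw [show s - 1 - 1 = s - 2 by omega] at pascal'
  have w_succ_mul : C * (w (i + 1) * i.choose (s - 1)) =
      C * (w i * i.choose (s - 1)) + C * (i.choose (s - 1) / D) := by
    simp only [hw]; push_cast; ring
  have w_succ_le : w (i + 1) ≤ 1 := by
    rw [hw, div_le_one hD]; push_cast
    have : (i : ℝ) + 1 ≤ k := by exact_mod_cast hi
    linarith
  have mono : (i.choose (s - 1) : ℝ) ≤ (k - 1).choose (s - 1) := by
    exact_mod_cast Nat.choose_le_choose _ (by omega : i ≤ k - 1)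
  have mono' : (i.choose (s - 2) : ℝ) ≤ (k - 1).choose (s - 2) := by
    exact_mod_cast Nat.choose_le_choose _ (by omega : i ≤ k - 1)
  have weighted_le : w (i + 1) * i.choose (s - 2) ≤ (k - 1).choose (s - 2) := by
    nlinarith [(i.choose (s - 2)).cast_nonneg (α := ℝ)]
  have div_le : (i.choose (s - 1) : ℝ) / D ≤ (k - 1).choose (s - 1) / D := by gcongr
  simp only [pascal, pascal', mul_add]
  linarith [mul_le_mul_of_nonneg_left mono hB, mul_le_mul_of_nonneg_left weighted_le hC,
    mul_le_mul_of_nonneg_left div_le hC]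

-- The multipliers `A`, `B`, `C` of constraints (i), (ii), (iii) in the duality certificate.
noncomputable def dualA (k s : ℕ) (β : ℝ) : ℝ := ((k : ℝ) + 1) * ((s : ℝ) - 1 - β) / s

noncomputable def dualB (k s : ℕ) (β : ℝ) : ℝ := (1 - ((s : ℝ) - 1) * β) / k.choose (s - 1)

noncomputable def dualC (k s : ℕ) (β : ℝ) : ℝ := ((k : ℝ) - s + 2) * β / k.choose (s - 1)

noncomputable def dualBeta (k s : ℕ) (a : ℝ) : ℝ :=
  (((s : ℝ) - 1) * ((k : ℝ) - s + 1) - a * ((s : ℝ) - 1)) /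
    (((k : ℝ) + 1) * ((k : ℝ) - s + 1) - a * ((s : ℝ) - 1))

section Dual

variable {k s : ℕ}

lemma cast_choose_pred_pos (hsk : s ≤ k) : (0 : ℝ) < k.choose (s - 1) := by
  exact_mod_cast Nat.choose_pos (by omega)

lemma dualB_nonneg (hsk : s ≤ k) {β : ℝ} (hβ : ((s : ℝ) - 1) * β ≤ 1) : 0 ≤ dualB k s β :=
  div_nonneg (by linarith) (cast_choose_pred_pos hsk).le

lemma dualC_nonneg (hsk : s ≤ k) {β : ℝ} (hβ : 0 ≤ β) : 0 ≤ dualC k s β := by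
  have : (s : ℝ) ≤ k := by exact_mod_cast hsk
  exact div_nonneg (mul_nonneg (by linarith) hβ) (cast_choose_pred_pos hsk).le

lemma dualA_add_dualB_mul_add_dualC_mul_choose (hs : 1 ≤ s) (hsk : s ≤ k) (β : ℝ) :
    dualA k s β + dualB k s β * k.choose s + dualC k s β * k.choose (s - 1) = k := by
  have h := cast_choose_mul k (r := s) (by omega)
  have := cast_choose_pred_pos hsk
  have : (0 : ℝ) < s := by exact_mod_cast hs
  unfold dualA dualB dualC
  field_simp
  linear_combination (1 - ((s : ℝ) - 1) * β) * h

lemma dualB_mul_add_dualC_mul_choose (hs : 2 ≤ s) (hsk : s ≤ k) (β : ℝ) :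
    dualB k s β * k.choose (s - 1) + dualC k s β * k.choose (s - 2) = 1 := by
  have h := cast_choose_mul k (r := s - 1) (by omega)
  rw [show s - 1 - 1 = s - 2 by omega, Nat.cast_sub (by omega : 1 ≤ s)] at h
  have := cast_choose_pred_pos hsk
  unfold dualB dualC
  field_simp
  linear_combination (-β) * h

lemma dualBeta_denom_pos (hs : 1 ≤ s) {a : ℝ} (ha0 : 0 ≤ a) (ha : a ≤ k - s) :
    0 < ((k : ℝ) + 1) * ((k : ℝ) - s + 1) - a * ((s : ℝ) - 1) := by
  have : (1 : ℝ) ≤ s := by exact_mod_cast hs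
  nlinarith

lemma dualBeta_nonneg (hs : 1 ≤ s) {a : ℝ} (ha0 : 0 ≤ a) (ha : a ≤ k - s) :
    0 ≤ dualBeta k s a := by
  have : (1 : ℝ) ≤ s := by exact_mod_cast hs
  exact div_nonneg (by nlinarith) (dualBeta_denom_pos hs ha0 ha).le

lemma sub_one_mul_dualBeta_le_one (hs : 2 ≤ s) (hk : s ^ 2 - 2 * s ≤ k) {a : ℝ} (ha0 : 0 ≤ a)
    (ha : a ≤ k - s) : ((s : ℝ) - 1) * dualBeta k s a ≤ 1 := by
  have hs' : (2 : ℝ) ≤ s := by exact_mod_cast hs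
  have hk' : (s : ℝ) ^ 2 - 2 * s ≤ k := by
    have : ((s ^ 2 - 2 * s : ℕ) : ℝ) ≤ k := by exact_mod_cast hk
    rwa [Nat.cast_sub (by nlinarith), Nat.cast_mul, Nat.cast_pow, Nat.cast_ofNat] at this
  rw [dualBeta, ← mul_div_assoc, div_le_one (dualBeta_denom_pos (by omega) ha0 ha)]
  nlinarith [mul_nonneg ha0 (by nlinarith : (0 : ℝ) ≤ ((s : ℝ) - 1) * ((s : ℝ) - 2)),
    mul_nonneg (by linarith : (0 : ℝ) ≤ (k : ℝ) - s + 1)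
      (by nlinarith : (0 : ℝ) ≤ (k : ℝ) + 1 - ((s : ℝ) - 1) ^ 2)]

-- This is the equation that determines `β`: the increment of `f` from `k - 1` to `k` is `1`.
lemma dualB_mul_add_dualC_mul_weighted_choose_pred (hs : 2 ≤ s) (hsk : s ≤ k) {a : ℝ}
    (ha0 : 0 ≤ a) (ha : a ≤ k - s) :
    dualB k s (dualBeta k s a) * (k - 1).choose (s - 1) + dualC k s (dualBeta k s a) *
      ((k - 1).choose (s - 2) + (k - 1).choose (s - 1) / ((k : ℝ) - s + 1 - a)) = 1 := by
  have hden := dualBeta_denom_pos (by omega) ha0 ha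
  have hZ := cast_choose_pred_pos hsk
  have hk : (0 : ℝ) < k := by exact_mod_cast (by omega : 0 < k)
  have hD : (0 : ℝ) < k - s + 1 - a := by linarith
  have pascal := cast_choose_succ_left (k - 1) (r := s - 1) (by omega)
  have h := Nat.add_one_mul_choose_eq (k - 1) (s - 2)
  rw [show s - 1 - 1 = s - 2 by omega, Nat.sub_add_cancel (by omega : 1 ≤ k)] at pascal
  rw [show s - 2 + 1 = s - 1 by omega, Nat.sub_add_cancel (by omega : 1 ≤ k)] at h
  have hX : ((k - 1).choose (s - 2) : ℝ) = ((s : ℝ) - 1) * k.choose (s - 1) / k := by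
    have h' : ((k * (k - 1).choose (s - 2) : ℕ) : ℝ) = (k.choose (s - 1) * (s - 1) : ℕ) :=
      congrArg _ h
    push_cast [Nat.cast_sub (by omega : 1 ≤ s)] at h'
    field_simp
    linarith
  have hY : ((k - 1).choose (s - 1) : ℝ) = k.choose (s - 1) - (k - 1).choose (s - 2) := by
    linarith
  have hβ : dualBeta k s a * (((k : ℝ) + 1) * ((k : ℝ) - s + 1) - a * ((s : ℝ) - 1)) =
      ((s : ℝ) - 1) * ((k : ℝ) - s + 1) - a * ((s : ℝ) - 1) := div_mul_cancel₀ _ hden.ne'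
  generalize dualBeta k s a = β at hβ ⊢
  rw [hY, hX]
  unfold dualB dualC
  field_simp
  linear_combination hβ

lemma dual_objective_eq (hs : 1 ≤ s) (hsk : s ≤ k) (m : ℕ) (n T a β : ℝ) :
    dualA k s β * n + dualB k s β * (T * m.choose s) +
        dualC k s β * (m.choose (s - 1) * (T * ((m : ℝ) - s + 1) - a) / ((k : ℝ) - s + 1)) =
      ((m.choose (s - 1) : ℝ) / k.choose (s - 1)) *
          (T * ((m : ℝ) - s + 1) / s * (β * ((k : ℝ) + 1) / ((k : ℝ) - s + 1) + 1) -
            a * β * ((k : ℝ) - s + 2) / ((k : ℝ) - s + 1)) +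
        ((k : ℝ) + 1) * ((s : ℝ) - 1 - β) * n / s := by
  have h := cast_choose_mul m (r := s) (by omega)
  have := cast_choose_pred_pos hsk
  have : (0 : ℝ) < s := by exact_mod_cast hs
  have : (0 : ℝ) < k - s + 1 := by
    have : (s : ℝ) ≤ k := by exact_mod_cast hsk
    linarith
  have hms : (m.choose s : ℝ) = m.choose (s - 1) * ((m : ℝ) - s + 1) / s := by
    field_simp
    linarith
  rw [hms]
  unfold dualA dualB dualC
  field_simp
  ring

end Dual

theorem stmt_14_general (k s t m : ℕ) (hs : 2 ≤ s) (hk : max 2 (s ^ 2 - 2 * s) ≤ k)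
    (hsk : s ≤ k) (hkm : k ≤ m)
    (α : ℕ) (hα : α ≤ k - s)
    (β : ℝ)
    (hβ : β = (((s : ℝ) - 1) * ((k : ℝ) - s + 1) - α * ((s : ℝ) - 1)) /
               (((k : ℝ) + 1) * ((k : ℝ) - s + 1) - α * ((s : ℝ) - 1)))
    (nn : ℕ → ℝ) (hpos : ∀ i ∈ Finset.Icc (s - 1) m, 0 ≤ nn i)
    (n : ℝ)
    (h1 : ∑ i ∈ Finset.Icc (s - 1) m, nn i = n)
    (h2 : ∑ i ∈ Finset.Icc (s - 1) m, (Nat.choose i s : ℝ) * nn i ≤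
      ((t : ℝ) - 1) * Nat.choose m s)
    (h3 : ∑ i ∈ Finset.Icc (s - 1) (k - 1),
            (((i : ℝ) - s + 1 - α) / ((k : ℝ) - s + 1 - α)) * (Nat.choose i (s - 1) : ℝ) * nn i +
          ∑ i ∈ Finset.Icc k m, (Nat.choose i (s - 1) : ℝ) * nn i ≤
      (Nat.choose m (s - 1) : ℝ) * (((t : ℝ) - 1) * ((m : ℝ) - s + 1) - α) / ((k : ℝ) - s + 1)) :
    ∑ i ∈ Finset.Icc (s - 1) m, (i : ℝ) * nn i ≤
      ((Nat.choose m (s - 1) : ℝ) / (Nat.choose k (s - 1) : ℝ)) *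
          (((t : ℝ) - 1) * ((m : ℝ) - s + 1) / s * (β * ((k : ℝ) + 1) / ((k : ℝ) - s + 1) + 1) -
            α * β * ((k : ℝ) - s + 2) / ((k : ℝ) - s + 1)) +
        ((k : ℝ) + 1) * ((s : ℝ) - 1 - β) * n / s := by
  replace hβ : β = dualBeta k s α := hβ
  have hα' : (α : ℝ) ≤ k - s := by rw [← Nat.cast_sub hsk]; exact_mod_cast hα
  have hβ0 : 0 ≤ β := hβ ▸ dualBeta_nonneg (by omega) α.cast_nonneg hα'
  have hβ1 : ((s : ℝ) - 1) * β ≤ 1 :=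
    hβ ▸ sub_one_mul_dualBeta_le_one hs (le_of_max_le_right hk) α.cast_nonneg hα'
  have hB := dualB_nonneg hsk hβ1
  have hC := dualC_nonneg hsk hβ0
  have hbase := (dualA_add_dualB_mul_add_dualC_mul_choose (by omega) hsk β).ge
  have lower := sum_mul_le_of_le_affine (Icc (s - 1) (k - 1)) (c := fun i => (i : ℝ))
    (fun i hi => hpos i (by simp only [mem_Icc] at hi ⊢; omega))
    fun i hi => natCast_le_affine_weighted_choose hs hB hC (by linarith) hbase
      (hβ ▸ dualB_mul_add_dualC_mul_weighted_choose_pred hs hsk α.cast_nonneg hα').le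
      (by simp only [mem_Icc] at hi; omega)
  have upper := sum_mul_le_of_le_affine (Icc k m) (c := fun i => (i : ℝ))
    (fun i hi => hpos i (by simp only [mem_Icc] at hi ⊢; omega))
    fun i hi => natCast_le_affine_choose hs hB hC hbase
      (dualB_mul_add_dualC_mul_choose hs hsk β).ge (by simp only [mem_Icc] at hi; omega)
  rw [← dual_objective_eq (by omega) hsk, ← h1]
  simp only [sum_Icc_eq_sum_Icc_pred_add_sum_Icc _ (by omega : s - 1 ≤ k) (by omega : 0 < k)
    (by omega : k ≤ m + 1)] at h2 ⊢
  linarith [mul_le_mul_of_nonneg_left h2 hB, mul_le_mul_of_nonneg_left h3 hC]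

/-- Linear-programming core of the main theorem: any nonnegative reals
`n_{s-1},…,n_m` satisfying Roman's constraints together with the `v = s-1`
constraint have `∑ i·n_i ≤ B_k(m,n;s,t)`. -/
theorem stmt_14 (k s t m : ℕ) (hs : 2 ≤ s) (hk : max 2 (s ^ 2 - 2 * s) ≤ k)
    (hsk : s ≤ k) (hkm : k ≤ m) (ht : 1 ≤ t)
    (α : ℕ) (hα : α ≤ k - s)
    (hmod : α ≡ (t - 1) * (m - s + 1) [MOD k - s + 1])
    (β : ℝ)
    (hβ : β = (((s : ℝ) - 1) * ((k : ℝ) - s + 1) - α * ((s : ℝ) - 1)) /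
               (((k : ℝ) + 1) * ((k : ℝ) - s + 1) - α * ((s : ℝ) - 1)))
    (nn : ℕ → ℝ) (hpos : ∀ i ∈ Finset.Icc (s - 1) m, 0 ≤ nn i)
    (n : ℝ)
    (h1 : ∑ i ∈ Finset.Icc (s - 1) m, nn i = n)
    (h2 : ∑ i ∈ Finset.Icc (s - 1) m, (Nat.choose i s : ℝ) * nn i ≤
      ((t : ℝ) - 1) * Nat.choose m s)
    (h3 : ∑ i ∈ Finset.Icc (s - 1) (k - 1),
            (((i : ℝ) - s + 1 - α) / ((k : ℝ) - s + 1 - α)) * (Nat.choose i (s - 1) : ℝ) * nn i +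
          ∑ i ∈ Finset.Icc k m, (Nat.choose i (s - 1) : ℝ) * nn i ≤
      (Nat.choose m (s - 1) : ℝ) * (((t : ℝ) - 1) * ((m : ℝ) - s + 1) - α) / ((k : ℝ) - s + 1)) :
    ∑ i ∈ Finset.Icc (s - 1) m, (i : ℝ) * nn i ≤
      ((Nat.choose m (s - 1) : ℝ) / (Nat.choose k (s - 1) : ℝ)) *
          (((t : ℝ) - 1) * ((m : ℝ) - s + 1) / s * (β * ((k : ℝ) + 1) / ((k : ℝ) - s + 1) + 1) -
            α * β * ((k : ℝ) - s + 2) / ((k : ℝ) - s + 1)) +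
        ((k : ℝ) + 1) * ((s : ℝ) - 1 - β) * n / s :=
  stmt_14_general k s t m hs hk hsk hkm α hα β hβ nn hpos n h1 h2 h3
end
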